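/- For every α > 2: g_α(s) ≥ 0 for all s ∈ [−1,1], g_α(s) > 0 for all s ∈ (−1,1), and g_α(1) = g_α(−1) = 0. -/

import Mathlib

/-- `c_α = 1/tan(π/α)`. -/
noncomputable def cAlpha (α : ℝ) : ℝ := 1 / Real.tan (Real.pi / α)

/-- `r_α(s) = √(c_α² + 1 − s²) − c_α`. -/
noncomputable def rAlpha (α s : ℝ) : ℝ :=
  Real.sqrt (cAlpha α ^ 2 + 1 - s ^ 2) - cAlpha α

/-- `g_α(s) = −1 − s² + (2α/π)·r_α(s) + (2αs/π)·arctan(s/(r_α(s) + c_α))`. -/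
noncomputable def gAlpha (α s : ℝ) : ℝ :=
  -1 - s ^ 2 + 2 * α * rAlpha α s / Real.pi
    + 2 * α * s / Real.pi * Real.arctan (s / (rAlpha α s + cAlpha α))

/-! Put `a = π / α ∈ (0, π/2)` and `k = sin a`, so that `c_α = cot a` and `c_α² + 1 = 1 / k²`.
Then `r_α(s) + c_α = √(1 - (k s)²) / k` and `arctan (s / (r_α(s) + c_α)) = arcsin (k s)` on
`[-1, 1]`, so there `g_α(s) = -1 - s² + (2/a) (s arcsin (k s) + √(1 - (k s)²) / k - c_α)`, whose
derivative is `-2 s + (2/a) arcsin (k s)`. Strict concavity of `sin` on `[0, π]` gives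
`k s < sin (a s)` for `0 < s < 1`, so `g_α` strictly decreases on `[0, 1]`; it is even and
vanishes at `1`. -/

open Real Set

namespace Real

lemma mul_sin_lt_sin_mul {a s : ℝ} (ha : 0 < a) (haπ : a ≤ π) (hs₀ : 0 < s) (hs₁ : s < 1) :
    sin a * s < sin (a * s) := by
  rw [mul_comm, mul_comm a]
  have h := strictConcaveOn_sin_Icc.2 (left_mem_Icc.2 pi_pos.le) ⟨ha.le, haπ⟩ ha.ne
    (sub_pos.2 hs₁) hs₀ (sub_add_cancel 1 s)
  simpa only [smul_eq_mul, sin_zero, mul_zero, zero_add] using h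

lemma arcsin_mul_sin_lt {a s : ℝ} (ha : 0 < a) (haπ : a ≤ π / 2) (hs₀ : 0 < s) (hs₁ : s < 1) :
    arcsin (sin a * s) < a * s := by
  have hsa : a * s ≤ π / 2 := by nlinarith
  calc arcsin (sin a * s) < arcsin (sin (a * s)) :=
        arcsin_lt_arcsin (by nlinarith [sin_nonneg_of_nonneg_of_le_pi ha.le (by linarith)])
          (mul_sin_lt_sin_mul ha (by linarith) hs₀ hs₁) (sin_le_one _)
    _ = a * s := arcsin_sin (by nlinarith [pi_pos]) hsa

end Real

lemma hasDerivAt_mul_arcsin_add_sqrt {k s : ℝ} (h₁ : -1 < k * s) (h₂ : k * s < 1) :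
    HasDerivAt (fun x ↦ x * arcsin (k * x) + √(1 - (k * x) ^ 2) / k) (arcsin (k * s)) s := by
  have hpos : 0 < 1 - (k * s) ^ 2 := by nlinarith
  have hR : √(1 - (k * s) ^ 2) ≠ 0 := (sqrt_pos.2 hpos).ne'
  have hks : HasDerivAt (fun x ↦ k * x) k s := by simpa using (hasDerivAt_id s).const_mul k
  have harcsin : HasDerivAt (fun x ↦ arcsin (k * x)) (1 / √(1 - (k * s) ^ 2) * k) s :=
    (hasDerivAt_arcsin h₁.ne' h₂.ne).comp s hks
  have hsqrt : HasDerivAt (fun x ↦ √(1 - (k * x) ^ 2))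
      (-(2 * (k * s) * k) / (2 * √(1 - (k * s) ^ 2))) s := by
    simpa using ((hks.pow 2).const_sub 1).sqrt hpos.ne'
  refine (((hasDerivAt_id' s).mul harcsin).add (hsqrt.div_const k)).congr_deriv ?_
  field_simp
  ring

section

variable {α : ℝ}

lemma pi_div_mem_Ioo (hα : 2 < α) : π / α ∈ Ioo 0 (π / 2) :=
  ⟨div_pos pi_pos (by linarith), div_lt_div_of_pos_left pi_pos two_pos hα⟩

lemma sin_pi_div_mem_Ioo (hα : 2 < α) : sin (π / α) ∈ Ioo 0 1 := by
  obtain ⟨ha₀, ha⟩ := pi_div_mem_Ioo hα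
  refine ⟨sin_pos_of_pos_of_lt_pi ha₀ (by linarith), ?_⟩
  rw [← sin_pi_div_two]
  exact sin_lt_sin_of_lt_of_le_pi_div_two (by linarith) le_rfl ha

lemma cAlpha_eq (α : ℝ) : cAlpha α = cos (π / α) / sin (π / α) := by
  rw [cAlpha, tan_eq_sin_div_cos, one_div_div]

lemma rAlpha_add_cAlpha (hα : 2 < α) (s : ℝ) :
    rAlpha α s + cAlpha α = √(1 - (sin (π / α) * s) ^ 2) / sin (π / α) := by
  have hk := (sin_pi_div_mem_Ioo hα).1
  have h : cAlpha α ^ 2 + 1 - s ^ 2 = (1 - (sin (π / α) * s) ^ 2) / sin (π / α) ^ 2 := by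
    rw [cAlpha_eq]
    field_simp
    linear_combination sin_sq_add_cos_sq (π / α)
  rw [rAlpha, sub_add_cancel, h, sqrt_div' _ (sq_nonneg _), sqrt_sq hk.le]

lemma arctan_div_rAlpha_add_cAlpha (hα : 2 < α) {s : ℝ} (hs : s ∈ Icc (-1) 1) :
    arctan (s / (rAlpha α s + cAlpha α)) = arcsin (sin (π / α) * s) := by
  obtain ⟨hk₀, hk₁⟩ := sin_pi_div_mem_Ioo hα
  have habs : |sin (π / α) * s| < 1 := by
    rw [abs_mul, abs_of_pos hk₀]
    nlinarith [abs_le.2 hs, abs_nonneg s]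
  rw [arcsin_eq_arctan (abs_lt.1 habs), rAlpha_add_cAlpha hα, div_div_eq_mul_div, mul_comm]

lemma gAlpha_eqOn (hα : 2 < α) :
    EqOn (gAlpha α) (fun s ↦ -1 - s ^ 2 + 2 * α / π *
      (s * arcsin (sin (π / α) * s) + √(1 - (sin (π / α) * s) ^ 2) / sin (π / α) - cAlpha α))
      (Icc (-1) 1) := by
  intro s hs
  have hr : rAlpha α s = √(1 - (sin (π / α) * s) ^ 2) / sin (π / α) - cAlpha α := by
    rw [← rAlpha_add_cAlpha hα, add_sub_cancel_right]
  rw [gAlpha, arctan_div_rAlpha_add_cAlpha hα hs, hr]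
  ring

lemma gAlpha_neg (s : ℝ) : gAlpha α (-s) = gAlpha α s := by
  simp only [gAlpha, rAlpha, neg_sq, neg_div, arctan_neg]
  ring

lemma gAlpha_abs (s : ℝ) : gAlpha α |s| = gAlpha α s := by
  rcases abs_choice s with h | h <;> simp only [h, gAlpha_neg]

lemma gAlpha_one (hα : 2 < α) : gAlpha α 1 = 0 := by
  obtain ⟨ha₀, ha⟩ := pi_div_mem_Ioo hα
  have hk := (sin_pi_div_mem_Ioo hα).1
  have hsqrt : √(1 - sin (π / α) ^ 2) = cos (π / α) := by
    rw [← cos_sq', sqrt_sq (cos_nonneg_of_neg_pi_div_two_le_of_le (by linarith) ha.le)]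
  rw [gAlpha_eqOn hα (right_mem_Icc.2 (by norm_num))]
  simp only [mul_one, arcsin_sin (by linarith) ha.le, hsqrt, ← cAlpha_eq, add_sub_cancel_right]
  field_simp
  ring

lemma strictAntiOn_gAlpha (hα : 2 < α) : StrictAntiOn (gAlpha α) (Icc 0 1) := by
  obtain ⟨ha₀, ha⟩ := pi_div_mem_Ioo hα
  obtain ⟨hk₀, hk₁⟩ := sin_pi_div_mem_Ioo hα
  have hα₀ : 0 < α := by linarith
  have hderiv : ∀ s ∈ Icc (0 : ℝ) 1, HasDerivAt (fun s ↦ -1 - s ^ 2 + 2 * α / π *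
      (s * arcsin (sin (π / α) * s) + √(1 - (sin (π / α) * s) ^ 2) / sin (π / α) - cAlpha α))
      (-(2 * s) + 2 * α / π * arcsin (sin (π / α) * s)) s := fun s hs ↦ by
    have h := hasDerivAt_mul_arcsin_add_sqrt (k := sin (π / α)) (s := s)
      (by nlinarith [hs.1]) (by nlinarith [hs.2])
    refine (((hasDerivAt_pow 2 s).const_sub (-1)).fun_add
      ((h.sub_const (cAlpha α)).const_mul _)).congr_deriv ?_
    ring
  refine (strictAntiOn_of_hasDerivWithinAt_neg (convex_Icc 0 1)
    (fun s hs ↦ (hderiv s hs).continuousAt.continuousWithinAt)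
    (fun s hs ↦ (hderiv s (interior_subset hs)).hasDerivWithinAt) ?_).congr
    ((gAlpha_eqOn hα).symm.mono (Icc_subset_Icc_left (by norm_num)))
  rw [interior_Icc]
  intro s ⟨hs₀, hs₁⟩
  have h := arcsin_mul_sin_lt ha₀ ha.le hs₀ hs₁
  have : 2 * α / π * arcsin (sin (π / α) * s) < 2 * s := by
    calc 2 * α / π * arcsin (sin (π / α) * s) < 2 * α / π * (π / α * s) := by gcongr
      _ = 2 * s := by field_simp
  linarith

end

/-- For every `α > 2`: `g_α(s) ≥ 0` for all `s ∈ [−1,1]`,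
`g_α(s) > 0` for all `s ∈ (−1,1)`, and `g_α(1) = g_α(−1) = 0`. -/
theorem gAlpha_nonneg_pos_and_zero_at_endpoints (α : ℝ) (hα : 2 < α) :
    (∀ s ∈ Set.Icc (-1 : ℝ) 1, 0 ≤ gAlpha α s) ∧
    (∀ s ∈ Set.Ioo (-1 : ℝ) 1, 0 < gAlpha α s) ∧
    gAlpha α 1 = 0 ∧ gAlpha α (-1) = 0 := by
  have hg₁ := gAlpha_one hα
  have hanti := strictAntiOn_gAlpha hα
  have hone : (1 : ℝ) ∈ Icc 0 1 := right_mem_Icc.2 zero_le_one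
  refine ⟨fun s hs ↦ ?_, fun s hs ↦ ?_, hg₁, by rw [gAlpha_neg, hg₁]⟩
  · rw [← gAlpha_abs, ← hg₁]
    exact hanti.antitoneOn ⟨abs_nonneg s, abs_le.2 hs⟩ hone (abs_le.2 hs)
  · rw [← gAlpha_abs, ← hg₁]
    exact hanti ⟨abs_nonneg s, (abs_lt.2 hs).le⟩ hone (abs_lt.2 hs)
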